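/- arXiv:1910.03538 — 5 statements merged into one kernel-verified Lean document; each statement's English description precedes it below -/
import Mathlib

section
/- Let Φ be a simply-laced irreducible root system, Δ the subsystem generated by all simple roots except one simple root α₁ whose coefficient in the highest root is 1. Then the set Φ∖Δ has exactly two orbits under the Weyl group W(Δ): the roots whose coefficient at α₁ is +1, and the roots whose coefficient at α₁ is −1. -/
open RealInnerProductSpace

/-- The reflection in the hyperplane orthogonal to `α`, as a linear endomorphism:
`v ↦ v - (2⟪α,v⟫/⟪α,α⟫) • α`. -/
noncomputable def rootReflection {V : Type*} [NormedAddCommGroup V]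
    [InnerProductSpace ℝ V] (α : V) : Module.End ℝ V :=
  LinearMap.id - (2 / ⟪α, α⟫) • LinearMap.smulRight (innerSL ℝ α).toLinearMap α

/-- Let `Φ` be a simply-laced irreducible root system with base `b : ι → V`,
let `α₁ = b i₁` be a simple root whose coefficient in the highest root `θ`
equals `1`, and let `Δ = Φ ∩ span (Π \ {α₁})`.  Then `Φ \ Δ` has exactly two
orbits under the Weyl group `W(Δ)` generated by the reflections in the roots of
`Δ`: the roots with coefficient `+1` at `α₁`, and those with coefficient `-1`. -/
theorem two_WDelta_orbits
    {V : Type*} [NormedAddCommGroup V] [InnerProductSpace ℝ V]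
    {ι : Type*} [Fintype ι]
    (Φ : Set V) (hfin : Φ.Finite)
    (h0 : ∀ α ∈ Φ, α ≠ 0)
    (hrefl : ∀ α ∈ Φ, ∀ β ∈ Φ, rootReflection α β ∈ Φ)
    (hlen : ∀ α ∈ Φ, ∀ β ∈ Φ, ‖α‖ = ‖β‖)
    (hcrys : ∀ α ∈ Φ, ∀ β ∈ Φ, ∃ n : ℤ, 2 * ⟪β, α⟫ = n * ⟪α, α⟫)
    (hirr : ∀ Φ₁ Φ₂ : Set V, Φ = Φ₁ ∪ Φ₂ →
      (∀ α ∈ Φ₁, ∀ β ∈ Φ₂, ⟪α, β⟫ = 0) → Φ₁ = ∅ ∨ Φ₂ = ∅)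
    (b : ι → V) (hb : ∀ i, b i ∈ Φ) (hli : LinearIndependent ℝ b)
    (c : V → ι → ℤ)
    (hc : ∀ β ∈ Φ, β = ∑ i, (c β i : ℝ) • b i)
    (hsign : ∀ β ∈ Φ, (∀ i, 0 ≤ c β i) ∨ (∀ i, c β i ≤ 0))
    (θ : V) (hθ : θ ∈ Φ) (hhigh : ∀ β ∈ Φ, ∀ i, c β i ≤ c θ i)
    (i₁ : ι) (hθ1 : c θ i₁ = 1)
    (Δ : Set V) (hΔ : Δ = Φ ∩ (Submodule.span ℝ (b '' {i | i ≠ i₁}) : Submodule ℝ V))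
    (W : Submonoid (Module.End ℝ V))
    (hW : W = Submonoid.closure {f | ∃ α ∈ Δ, f = rootReflection α}) :
    (∀ β ∈ Φ \ Δ, c β i₁ = 1 ∨ c β i₁ = -1) ∧
    (∃ β ∈ Φ \ Δ, c β i₁ = 1) ∧ (∃ β ∈ Φ \ Δ, c β i₁ = -1) ∧
    (∀ β ∈ Φ \ Δ, ∀ γ ∈ Φ \ Δ, (∃ w ∈ W, w β = γ) ↔ c β i₁ = c γ i₁) := by
  clear hfin hirr
  classical
  have hq : ∀ α ∈ Φ, (0:ℝ) < ⟪α, α⟫ := fun α hα => by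
    rw [real_inner_self_eq_norm_sq]; exact pow_pos (norm_pos_iff.mpr (h0 α hα)) 2
  have happly : ∀ (α v : V), rootReflection α v = v - ((2 / ⟪α, α⟫) * ⟪α, v⟫) • α := by
    intro α v; simp [rootReflection, smul_smul]
  have hreflP : ∀ α ∈ Φ, ∀ β : V, ∀ n : ℤ, 2 * ⟪β, α⟫ = n * ⟪α, α⟫ →
      rootReflection α β = β - (n:ℝ) • α := by
    intro α hα β n hn
    rw [happly]
    have hq' := (hq α hα).ne'
    have : (2 / ⟪α, α⟫) * ⟪α, β⟫ = (n:ℝ) := by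
      rw [real_inner_comm]; field_simp; linarith [hn, real_inner_comm α β]
    rw [this]
  -- negation is in Φ
  have hneg : ∀ β ∈ Φ, -β ∈ Φ := by
    intro β hβ
    have h2 : 2 * ⟪β, β⟫ = ((2:ℤ):ℝ) * ⟪β, β⟫ := by push_cast; ring
    have hm := hrefl β hβ β hβ
    rw [hreflP β hβ β 2 h2] at hm
    have : β - ((2:ℤ):ℝ) • β = -β := by push_cast; rw [two_smul]; abel
    rwa [this] at hm
  -- uniqueness of coefficients
  have hcu : ∀ β ∈ Φ, ∀ e : ι → ℤ, β = ∑ i, (e i : ℝ) • b i → ∀ i, c β i = e i := by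
    intro β hβ e he i
    have h0' : ∑ i, ((c β i : ℝ) - (e i : ℝ)) • b i = 0 := by
      simp only [sub_smul, Finset.sum_sub_distrib]
      rw [← hc β hβ, ← he, sub_self]
    have := Fintype.linearIndependent_iff.mp hli _ h0' i
    have h' : (c β i : ℝ) = (e i : ℝ) := by linarith
    exact_mod_cast h'
  have hcneg : ∀ β ∈ Φ, ∀ i, c (-β) i = - c β i := by
    intro β hβ i
    refine hcu (-β) (hneg β hβ) (fun i => - c β i) ?_ i
    have hrhs : ∑ i, ((- c β i : ℤ) : ℝ) • b i = -∑ i, (c β i : ℝ) • b i := by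
      push_cast
      simp [neg_smul, ← Finset.sum_neg_distrib]
    rw [hrhs, ← hc β hβ]
  have hcb : ∀ j i, c (b j) i = if i = j then 1 else 0 := by
    intro j i
    refine hcu (b j) (hb j) (fun i => if i = j then 1 else 0) ?_ i
    push_cast
    rw [Finset.sum_congr rfl (fun i _ => by rw [ite_smul, one_smul, zero_smul])]
    simp
  -- coefficient extraction from span
  have hspan0 : ∀ d : ι → ℝ, (∑ i, d i • b i) ∈
      Submodule.span ℝ (b '' {i | i ≠ i₁}) → d i₁ = 0 := by
    intro d hd
    obtain ⟨l, hl, hlt⟩ := (Finsupp.mem_span_image_iff_linearCombination ℝ).mp hd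
    have hl2 : ∑ i, (l i - d i) • b i = 0 := by
      simp only [sub_smul, Finset.sum_sub_distrib]
      rw [sub_eq_zero, ← hlt, Finsupp.linearCombination_apply, Finsupp.sum_fintype]
      intro i; exact zero_smul ℝ (b i)
    have h1 := Fintype.linearIndependent_iff.mp hli _ hl2 i₁
    have h2 : l i₁ = 0 := by
      by_contra h
      exact (Finsupp.mem_supported ℝ l).mp hl (Finsupp.mem_support_iff.mpr h) rfl
    linarith
  -- β - m • b j expansion
  have haddc : ∀ β ∈ Φ, ∀ (m : ℤ) (j : ι),
      β - (m:ℝ) • b j = ∑ i, ((c β i - if i = j then m else 0 : ℤ) : ℝ) • b i := by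
    intro β hβ m j
    push_cast
    simp only [sub_smul, Finset.sum_sub_distrib, ← hc β hβ]
    congr 1
    rw [Finset.sum_congr rfl (fun i _ => by rw [ite_smul, zero_smul])]
    simp
  -- membership in Δ
  have hmemΔ : ∀ β ∈ Φ, (β ∈ Δ ↔ c β i₁ = 0) := by
    intro β hβ
    rw [hΔ]
    constructor
    · rintro ⟨-, hsp⟩
      have hz := hspan0 (fun i => (c β i : ℝ)) (by rw [← hc β hβ]; exact hsp)
      exact_mod_cast show ((c β i₁ : ℤ) : ℝ) = 0 from hz
    · intro h
      refine ⟨hβ, ?_⟩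
      rw [hc β hβ]
      apply Submodule.sum_mem
      intro i _
      by_cases hi : i = i₁
      · subst hi; rw [h]; simp
      · exact Submodule.smul_mem _ _ (Submodule.subset_span ⟨i, hi, rfl⟩)
  -- Part 1
  have hpm : ∀ β ∈ Φ \ Δ, c β i₁ = 1 ∨ c β i₁ = -1 := by
    rintro β ⟨hβ, hβΔ⟩
    have hne : c β i₁ ≠ 0 := fun h => hβΔ ((hmemΔ β hβ).mpr h)
    rcases hsign β hβ with hp | hn
    · left; have h1 := hhigh β hβ i₁; have := hp i₁; omega
    · right
      have h1 := hhigh (-β) (hneg β hβ) i₁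
      rw [hcneg β hβ] at h1
      have := hn i₁; omega
  have hθΔ : θ ∈ Φ \ Δ := ⟨hθ, fun h => by have := (hmemΔ θ hθ).mp h; omega⟩
  have hθΔ' : -θ ∈ Φ \ Δ := ⟨hneg θ hθ, fun h => by
    have := (hmemΔ (-θ) (hneg θ hθ)).mp h; rw [hcneg θ hθ] at this; omega⟩
  -- reflections are involutions
  have hinv2 : ∀ α ∈ Φ, rootReflection α * rootReflection α = 1 := by
    intro α hα
    apply LinearMap.ext; intro v
    have hq' := (hq α hα).ne'
    show rootReflection α (rootReflection α v) = v
    rw [happly, happly, inner_sub_right, inner_smul_right]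
    have h1 : (2 / ⟪α, α⟫) * (⟪α, v⟫ - ((2 / ⟪α, α⟫) * ⟪α, v⟫) * ⟪α, α⟫)
        = -((2 / ⟪α, α⟫) * ⟪α, v⟫) := by field_simp; ring
    rw [h1, neg_smul]
    abel
  -- W has inverses
  have hWinv : ∀ w ∈ W, ∃ w' ∈ W, w' * w = 1 := by
    intro w hw
    rw [hW] at hw
    induction hw using Submonoid.closure_induction with
    | mem x hx =>
      obtain ⟨α, hα, rfl⟩ := hx
      have hαΦ : α ∈ Φ := by rw [hΔ] at hα; exact hα.1
      exact ⟨rootReflection α, by rw [hW]; exact Submonoid.subset_closure ⟨α, hα, rfl⟩,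
        hinv2 α hαΦ⟩
    | one => exact ⟨1, one_mem W, one_mul 1⟩
    | mul x y hx hy ihx ihy =>
      obtain ⟨x', hx', hx1⟩ := ihx
      obtain ⟨y', hy', hy1⟩ := ihy
      refine ⟨y' * x', mul_mem hy' hx', ?_⟩
      rw [mul_assoc, ← mul_assoc x' x y, hx1, one_mul, hy1]
  -- W moves vectors within the span U
  have hWU : ∀ w ∈ W, ∀ v : V,
      w v - v ∈ Submodule.span ℝ (b '' {i | i ≠ i₁}) := by
    intro w hw
    rw [hW] at hw
    induction hw using Submonoid.closure_induction with
    | mem x hx =>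
      intro v
      obtain ⟨α, hα, rfl⟩ := hx
      rw [hΔ] at hα
      rw [happly]
      have : v - ((2 / ⟪α, α⟫) * ⟪α, v⟫) • α - v = -(((2 / ⟪α, α⟫) * ⟪α, v⟫) • α) := by abel
      rw [this]
      exact Submodule.neg_mem _ (Submodule.smul_mem _ _ hα.2)
    | one => intro v; simp
    | mul x y hx hy ihx ihy =>
      intro v
      have h1 := ihx (y v)
      have h2 := ihy v
      have : (x * y) v - v = (x (y v) - y v) + (y v - v) := by
        rw [Module.End.mul_apply]; abel
      rw [this]
      exact Submodule.add_mem _ h1 h2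
  -- simply-laced pairing bound
  have hbound : ∀ α ∈ Φ, ∀ β ∈ Φ, β ≠ -α → ∀ n : ℤ, 2 * ⟪β, α⟫ = n * ⟪α, α⟫ → -1 ≤ n := by
    intro α hα β hβ hne n hn
    by_contra h
    push_neg at h
    have h2 : (n:ℝ) ≤ -2 := by exact_mod_cast (by omega : n ≤ -2)
    have hq' := hq α hα
    have hnorm : ‖β‖ = ‖α‖ := hlen β hβ α hα
    have hqe : ⟪α, α⟫ = ‖α‖ * ‖α‖ := real_inner_self_eq_norm_mul_norm α
    have hcs : ⟪-β, α⟫ ≤ ‖-β‖ * ‖α‖ := real_inner_le_norm _ _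
    have hge : ‖-β‖ * ‖α‖ ≤ ⟪-β, α⟫ := by
      rw [inner_neg_left, norm_neg, hnorm, ← hqe]; nlinarith
    have heq := inner_eq_norm_mul_iff_real.mp (le_antisymm hcs hge)
    rw [norm_neg, hnorm] at heq
    have hα0 : ‖α‖ ≠ 0 := norm_ne_zero_iff.mpr (h0 α hα)
    have : -β = α := smul_right_injective V hα0 heq
    exact hne (by rw [← this, neg_neg])
  -- θ is dominant
  have hdom : ∀ j, 0 ≤ ⟪b j, θ⟫ := by
    intro j
    by_contra hlt
    push_neg at hlt
    obtain ⟨n, hn⟩ := hcrys (b j) (hb j) θ hθ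
    have hq' := hq (b j) (hb j)
    have hn0 : n < 0 := by
      by_contra hn0
      push_neg at hn0
      have : (0:ℝ) ≤ (n:ℝ) := by exact_mod_cast hn0
      nlinarith [real_inner_comm θ (b j)]
    have hmem := hrefl (b j) (hb j) θ hθ
    rw [hreflP (b j) (hb j) θ n hn] at hmem
    have hce := hcu _ hmem _ (haddc θ hθ n j) j
    have hh := hhigh _ hmem j
    rw [hce] at hh
    simp at hh
    omega
  -- the unique dominant coefficient-1 root is θ
  have hdomuniq : ∀ β ∈ Φ, c β i₁ = 1 → (∀ j, j ≠ i₁ → 0 ≤ ⟪b j, β⟫) → β = θ := by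
    intro β hβ hc1 hdomβ
    have hnorm : ‖β‖ = ‖θ‖ := hlen β hβ θ hθ
    have hsumrep : θ - β = ∑ i, ((c θ i - c β i : ℤ) : ℝ) • b i := by
      push_cast
      simp only [sub_smul, Finset.sum_sub_distrib]
      rw [← hc θ hθ, ← hc β hβ]
    have h3 : 0 ≤ ⟪β, θ - β⟫ := by
      rw [hsumrep, inner_sum]
      apply Finset.sum_nonneg
      intro i _
      rw [inner_smul_right]
      by_cases hi : i = i₁
      · subst hi; rw [hθ1, hc1]; simp
      · have h4 : (0:ℝ) ≤ ((c θ i - c β i : ℤ) : ℝ) := by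
          have := hhigh β hβ i; exact_mod_cast (by omega : (0:ℤ) ≤ c θ i - c β i)
        have h5 : 0 ≤ ⟪β, b i⟫ := by rw [real_inner_comm]; exact hdomβ i hi
        positivity
    have hkey : ⟪β, β⟫ ≤ ⟪β, θ⟫ := by
      rw [inner_sub_right] at h3; linarith
    have hqe : ⟪β, β⟫ = ‖β‖ * ‖β‖ := real_inner_self_eq_norm_mul_norm β
    have hcs : ⟪β, θ⟫ ≤ ‖β‖ * ‖θ‖ := real_inner_le_norm _ _
    have heq : ⟪β, θ⟫ = ‖β‖ * ‖θ‖ := le_antisymm hcs (by rw [← hnorm]; linarith)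
    have h6 := inner_eq_norm_mul_iff_real.mp heq
    rw [hnorm] at h6
    have hθ0 : ‖θ‖ ≠ 0 := norm_ne_zero_iff.mpr (h0 θ hθ)
    exact smul_right_injective V hθ0 h6
  -- main induction: any coefficient-1 root can be moved to θ
  have hmain : ∀ N : ℕ, ∀ β ∈ Φ, c β i₁ = 1 → (∑ j, (c θ j - c β j).toNat) = N →
      ∃ w ∈ W, w β = θ := by
    intro N
    induction N using Nat.strong_induction_on with
    | _ N ih =>
      intro β hβ hc1 hN
      by_cases hβθ : β = θ
      · exact ⟨1, one_mem W, by rw [hβθ]; exact Module.End.one_apply θ⟩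
      · have hex : ∃ j, j ≠ i₁ ∧ ⟪b j, β⟫ < 0 := by
          by_contra h
          push_neg at h
          exact hβθ (hdomuniq β hβ hc1 h)
        obtain ⟨j, hj, hjβ⟩ := hex
        obtain ⟨n, hn⟩ := hcrys (b j) (hb j) β hβ
        have hq' := hq (b j) (hb j)
        have hβne : β ≠ -(b j) := by
          intro h
          have h1 : c β i₁ = - c (b j) i₁ := by rw [h, hcneg (b j) (hb j)]
          rw [hcb j i₁, if_neg (fun hh : i₁ = j => hj hh.symm)] at h1
          omega
        have hn1 : n = -1 := by
          have hge := hbound (b j) (hb j) β hβ hβne n hn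
          have hlt0 : n < 0 := by
            by_contra h'
            push_neg at h'
            have : (0:ℝ) ≤ (n:ℝ) := by exact_mod_cast h'
            rw [real_inner_comm] at hjβ
            nlinarith
          omega
        have hmem := hrefl (b j) (hb j) β hβ
        rw [hreflP (b j) (hb j) β n hn, hn1] at hmem
        have hce : ∀ i, c (β - ((-1:ℤ):ℝ) • b j) i = c β i - if i = j then -1 else 0 :=
          fun i => hcu _ hmem _ (haddc β hβ (-1) j) i
        have hc1' : c (β - ((-1:ℤ):ℝ) • b j) i₁ = 1 := by
          rw [hce i₁, if_neg (fun hh : i₁ = j => hj hh.symm)]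
          omega
        have hltj : c β j < c θ j := by
          have := hhigh _ hmem j
          rw [hce j] at this
          simp at this
          omega
        have hNlt : ∑ i, (c θ i - c (β - ((-1:ℤ):ℝ) • b j) i).toNat < N := by
          rw [← hN]
          apply Finset.sum_lt_sum
          · intro i _
            rw [hce i]
            by_cases hi : i = j <;> simp [hi] <;> omega
          · exact ⟨j, Finset.mem_univ j, by rw [hce j]; simp; omega⟩
        obtain ⟨w, hw, hwθ⟩ := ih _ hNlt _ hmem hc1' rfl
        have hbjΔ : b j ∈ Δ := by
          rw [hΔ]
          exact ⟨hb j, Submodule.subset_span ⟨j, hj, rfl⟩⟩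
        have hsW : rootReflection (b j) ∈ W := by
          rw [hW]; exact Submonoid.subset_closure ⟨b j, hbjΔ, rfl⟩
        refine ⟨w * rootReflection (b j), mul_mem hw hsW, ?_⟩
        rw [Module.End.mul_apply, hreflP (b j) (hb j) β n hn, hn1, hwθ]
  -- final assembly
  refine ⟨hpm, ⟨θ, hθΔ, hθ1⟩, ⟨-θ, hθΔ', by rw [hcneg θ hθ]; omega⟩, ?_⟩
  rintro β ⟨hβ, hβΔ⟩ γ ⟨hγ, hγΔ⟩
  constructor
  · rintro ⟨w, hw, hwβ⟩
    have hU := hWU w hw β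
    rw [hwβ] at hU
    have hrep : γ - β = ∑ i, ((c γ i - c β i : ℤ) : ℝ) • b i := by
      push_cast
      simp only [sub_smul, Finset.sum_sub_distrib]
      rw [← hc γ hγ, ← hc β hβ]
    have := hspan0 _ (by rw [← hrep]; exact hU)
    have : ((c γ i₁ - c β i₁ : ℤ) : ℝ) = 0 := this
    have : c γ i₁ - c β i₁ = 0 := by exact_mod_cast this
    omega
  · intro hcc
    rcases hpm β ⟨hβ, hβΔ⟩ with h1 | h1
    · obtain ⟨w₁, hw₁, hwθ₁⟩ := hmain _ β hβ h1 rfl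
      obtain ⟨w₂, hw₂, hwθ₂⟩ := hmain _ γ hγ (by omega) rfl
      obtain ⟨w₂', hw₂', hinv⟩ := hWinv w₂ hw₂
      refine ⟨w₂' * w₁, mul_mem hw₂' hw₁, ?_⟩
      rw [Module.End.mul_apply, hwθ₁, ← hwθ₂, ← Module.End.mul_apply, hinv]
      exact Module.End.one_apply γ
    · have hb1 : c (-β) i₁ = 1 := by rw [hcneg β hβ]; omega
      have hg1 : c (-γ) i₁ = 1 := by rw [hcneg γ hγ]; omega
      obtain ⟨w₁, hw₁, hwθ₁⟩ := hmain _ (-β) (hneg β hβ) hb1 rfl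
      obtain ⟨w₂, hw₂, hwθ₂⟩ := hmain _ (-γ) (hneg γ hγ) hg1 rfl
      obtain ⟨w₂', hw₂', hinv⟩ := hWinv w₂ hw₂
      refine ⟨w₂' * w₁, mul_mem hw₂' hw₁, ?_⟩
      have : (w₂' * w₁) (-β) = -γ := by
        rw [Module.End.mul_apply, hwθ₁, ← hwθ₂, ← Module.End.mul_apply, hinv]
        exact Module.End.one_apply (-γ)
      rw [map_neg] at this
      exact neg_injective this
end

section
/- Let Φ be a simply-laced irreducible root system with base Π, let α₁ ∈ Π have coefficient 1 in the highest root, and let Δ be the subsystem spanned by Π∖{α₁}. Then for every root β ∈ Φ∖Δ there exists a root α ∈ Δ such that α + β ∈ Φ. -/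
open RealInnerProductSpace

theorem rootReflection_apply {V : Type*} [NormedAddCommGroup V]
    [InnerProductSpace ℝ V] (α v : V) :
    rootReflection α v = v - (2 / ⟪α, α⟫ * ⟪α, v⟫) • α := by
  simp [rootReflection, LinearMap.sub_apply, LinearMap.smul_apply,
    LinearMap.smulRight_apply, smul_smul]

/-- Let `Φ` be a simply-laced irreducible root system (of rank at least 2) with
base `b : ι → V`, let `α₁ = b i₁` be a simple root whose coefficient in the
highest root `θ` equals `1`, and let `Δ = Φ ∩ span (Π \ {α₁})`.  Then for every
root `β ∈ Φ \ Δ` there is a root `α ∈ Δ` with `α + β ∈ Φ`. -/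
theorem exists_root_in_Delta_add
    {V : Type*} [NormedAddCommGroup V] [InnerProductSpace ℝ V]
    {ι : Type*} [Fintype ι] (hcard : 2 ≤ Fintype.card ι)
    (Φ : Set V) (hfin : Φ.Finite)
    (h0 : ∀ α ∈ Φ, α ≠ 0)
    (hrefl : ∀ α ∈ Φ, ∀ β ∈ Φ, rootReflection α β ∈ Φ)
    (hlen : ∀ α ∈ Φ, ∀ β ∈ Φ, ‖α‖ = ‖β‖)
    (hcrys : ∀ α ∈ Φ, ∀ β ∈ Φ, ∃ n : ℤ, 2 * ⟪β, α⟫ = n * ⟪α, α⟫)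
    (hirr : ∀ Φ₁ Φ₂ : Set V, Φ = Φ₁ ∪ Φ₂ →
      (∀ α ∈ Φ₁, ∀ β ∈ Φ₂, ⟪α, β⟫ = 0) → Φ₁ = ∅ ∨ Φ₂ = ∅)
    (b : ι → V) (hb : ∀ i, b i ∈ Φ) (hli : LinearIndependent ℝ b)
    (c : V → ι → ℤ)
    (hc : ∀ β ∈ Φ, β = ∑ i, (c β i : ℝ) • b i)
    (hsign : ∀ β ∈ Φ, (∀ i, 0 ≤ c β i) ∨ (∀ i, c β i ≤ 0))
    (θ : V) (hθ : θ ∈ Φ) (hhigh : ∀ β ∈ Φ, ∀ i, c β i ≤ c θ i)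
    (i₁ : ι) (hθ1 : c θ i₁ = 1)
    (Δ : Set V) (hΔ : Δ = Φ ∩ (Submodule.span ℝ (b '' {i | i ≠ i₁}) : Submodule ℝ V)) :
    ∀ β ∈ Φ \ Δ, ∃ α ∈ Δ, α + β ∈ Φ := by
  classical
  subst hΔ
  set W : Submodule ℝ V := Submodule.span ℝ (b '' {i | i ≠ i₁}) with hW
  intro β hβ'
  obtain ⟨hβ, hβΔ⟩ := hβ'
  -- positivity of inner self
  have hA : ∀ γ ∈ Φ, 0 < ⟪γ, γ⟫ := by
    intro γ hγ
    rcases lt_or_eq_of_le (real_inner_self_nonneg (x := γ)) with h | h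
    · exact h
    · exact absurd (inner_self_eq_zero.mp h.symm) (h0 γ hγ)
  -- Φ is closed under negation
  have hneg : ∀ γ ∈ Φ, -γ ∈ Φ := by
    intro γ hγ
    have h1 : rootReflection γ γ = -γ := by
      rw [rootReflection_apply]
      rw [div_mul_cancel₀ 2 (ne_of_gt (hA γ hγ))]
      rw [two_smul]; abel
    have := hrefl γ hγ γ hγ
    rwa [h1] at this
  -- uniqueness of coefficients
  have huniq : ∀ d : ι → ℝ, ∑ i, d i • b i = 0 → ∀ i, d i = 0 :=
    Fintype.linearIndependent_iff.mp hli
  -- coefficients of negation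
  have hcneg : ∀ γ ∈ Φ, ∀ i, c (-γ) i = - c γ i := by
    intro γ hγ i
    have h1 : ∑ i, (((c (-γ) i : ℝ)) + (c γ i : ℝ)) • b i = 0 := by
      simp only [add_smul]
      rw [Finset.sum_add_distrib, ← hc γ hγ, ← hc (-γ) (hneg γ hγ)]
      abel
    have := huniq _ h1 i
    have : ((c (-γ) i : ℝ)) = -(c γ i : ℝ) := by linarith
    exact_mod_cast this
  -- any root with vanishing i₁-coordinate lies in W
  have hmemW : ∀ γ ∈ Φ, c γ i₁ = 0 → γ ∈ W := by
    intro γ hγ h1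
    rw [hc γ hγ]
    apply Submodule.sum_mem
    intro i _
    by_cases hi : i = i₁
    · subst hi; rw [h1]; simp
    · exact Submodule.smul_mem _ _ (Submodule.subset_span ⟨i, hi, rfl⟩)
  -- difference of two roots with equal i₁-coordinate lies in W
  have hdiff : ∀ γ ∈ Φ, ∀ δ ∈ Φ, c γ i₁ = c δ i₁ → γ - δ ∈ W := by
    intro γ hγ δ hδ h1
    have h2 : γ - δ = ∑ i, ((c γ i : ℝ) - (c δ i : ℝ)) • b i := by
      simp only [sub_smul]
      rw [Finset.sum_sub_distrib, ← hc γ hγ, ← hc δ hδ]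
    rw [h2]
    apply Submodule.sum_mem
    intro i _
    by_cases hi : i = i₁
    · subst hi; rw [h1]; simp
    · exact Submodule.smul_mem _ _ (Submodule.subset_span ⟨i, hi, rfl⟩)
  -- bounds on the i₁-coordinate
  have hbound : ∀ γ ∈ Φ, -1 ≤ c γ i₁ ∧ c γ i₁ ≤ 1 := by
    intro γ hγ
    constructor
    · have := hhigh (-γ) (hneg γ hγ) i₁
      rw [hcneg γ hγ, hθ1] at this
      omega
    · have := hhigh γ hγ i₁
      omega
  -- β has nonzero i₁-coordinate
  have hcβ : c β i₁ ≠ 0 := by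
    intro h1
    exact hβΔ ⟨hβ, hmemW β hβ h1⟩
  -- Cauchy–Schwarz extremal equality
  have hEq : ∀ γ ∈ Φ, ⟪γ, β⟫ = ⟪β, β⟫ → γ = β := by
    intro γ hγ h1
    have hlen' : ‖γ‖ = ‖β‖ := hlen γ hγ β hβ
    have h2 : ⟪γ, β⟫ = ‖γ‖ * ‖β‖ := by
      rw [h1, real_inner_self_eq_norm_mul_norm, hlen']
    have h3 := inner_eq_norm_mul_iff_real.mp h2
    rw [hlen'] at h3
    have hβ0 : ‖β‖ ≠ 0 := norm_ne_zero_iff.mpr (h0 β hβ)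
    exact smul_right_injective V hβ0 h3
  -- main step: there exists i ≠ i₁ with ⟪b i, β⟫ ≠ 0
  have hex : ∃ i, i ≠ i₁ ∧ ⟪b i, β⟫ ≠ 0 := by
    by_contra hcon
    push_neg at hcon
    -- β is orthogonal to W
    have HW : ∀ w ∈ W, ⟪w, β⟫ = 0 := by
      intro w hw
      induction hw using Submodule.span_induction with
      | mem x hx => obtain ⟨i, hi, rfl⟩ := hx; exact hcon i hi
      | zero => simp
      | add x y hx hy ihx ihy => rw [inner_add_left, ihx, ihy, add_zero]
      | smul a x hx ihx => rw [real_inner_smul_left, ihx, mul_zero]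
    -- every root with the same i₁-coordinate as β equals β
    have key : ∀ γ ∈ Φ, c γ i₁ = c β i₁ → γ = β := by
      intro γ hγ h1
      apply hEq γ hγ
      have h2 := HW _ (hdiff γ hγ β hβ h1)
      rw [inner_sub_left] at h2
      linarith
    -- every root equals β, -β, or lies in W
    have cover : Φ = (Φ ∩ (W : Set V)) ∪ {β, -β} := by
      apply Set.Subset.antisymm
      · intro γ hγ
        have hbγ := hbound γ hγ
        have hbβ := hbound β hβ
        rcases show c γ i₁ = 0 ∨ c γ i₁ = c β i₁ ∨ c γ i₁ = - c β i₁ by omega with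
          h | h | h
        · exact Or.inl ⟨hγ, hmemW γ hγ h⟩
        · exact Or.inr (Or.inl (key γ hγ h))
        · right; right
          have hγ' : -γ ∈ Φ := hneg γ hγ
          have : -γ = β := key (-γ) hγ' (by rw [hcneg γ hγ]; omega)
          simp only [Set.mem_singleton_iff]
          rw [← this]; abel
      · rintro γ (⟨hγ, -⟩ | h)
        · exact hγ
        · rcases h with h | h
          · rwa [h]
          · rw [Set.mem_singleton_iff] at h; rw [h]; exact hneg β hβ
    have horth : ∀ x ∈ Φ ∩ (W : Set V), ∀ y ∈ ({β, -β} : Set V), ⟪x, y⟫ = 0 := by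
      rintro x ⟨-, hxW⟩ y hy
      rcases hy with h | h
      · rw [h]; exact HW x hxW
      · rw [Set.mem_singleton_iff] at h
        rw [h, inner_neg_right, HW x hxW, neg_zero]
    rcases hirr _ _ cover horth with h | h
    · obtain ⟨j, hj⟩ := Fintype.exists_ne_of_one_lt_card (by omega) i₁
      have : b j ∈ Φ ∩ (W : Set V) :=
        ⟨hb j, Submodule.subset_span ⟨j, hj, rfl⟩⟩
      rw [h] at this; exact this
    · have : β ∈ ({β, -β} : Set V) := Or.inl rfl
      rw [h] at this; exact this
  -- pick α ∈ Δ with ⟪α, β⟫ < 0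
  obtain ⟨i, hi, hiβ⟩ := hex
  have hbiW : b i ∈ W := Submodule.subset_span ⟨i, hi, rfl⟩
  obtain ⟨α, hαΦ, hαW, hαβ⟩ :
      ∃ α, α ∈ Φ ∧ α ∈ W ∧ ⟪α, β⟫ < 0 := by
    rcases lt_or_gt_of_ne hiβ with h | h
    · exact ⟨b i, hb i, hbiW, h⟩
    · exact ⟨-(b i), hneg _ (hb i), Submodule.neg_mem _ hbiW,
        by rw [inner_neg_left]; linarith⟩
  -- crystallographic condition pins down the inner product
  have hAα : 0 < ⟪α, α⟫ := hA α hαΦ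
  obtain ⟨n, hn⟩ := hcrys α hαΦ β hβ
  have hlenαβ : ‖α‖ = ‖β‖ := hlen α hαΦ β hβ
  have hCS : |⟪β, α⟫| ≤ ⟪α, α⟫ := by
    have := abs_real_inner_le_norm β α
    rw [real_inner_self_eq_norm_mul_norm, ← hlenαβ] at *
    linarith
  have hβα : ⟪β, α⟫ < 0 := by rwa [real_inner_comm] at hαβ
  have hn1 : n = -1 ∨ n = -2 := by
    have h1 : (n : ℝ) * ⟪α, α⟫ < 0 := by rw [← hn]; linarith
    have h2 : (n : ℝ) < 0 := by
      by_contra h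
      push_neg at h
      nlinarith
    have h3 : -2 ≤ (n : ℝ) := by
      rcases abs_le.mp hCS with ⟨h4, -⟩
      by_contra h
      push_neg at h
      nlinarith
    have h2' : n < 0 := by exact_mod_cast h2
    have h3' : (-2 : ℤ) ≤ n := by exact_mod_cast h3
    omega
  -- rule out n = -2 (would force β = -α ∈ Δ)
  have hn' : n = -1 := by
    rcases hn1 with h | h
    · exact h
    · exfalso
      rw [h] at hn
      push_cast at hn
      have h5 : ⟪-β, α⟫ = ⟪α, α⟫ := by
        rw [inner_neg_left]; linarith
      have h6 : -β = α := by
        have hβΦ' : -β ∈ Φ := hneg β hβ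
        have hl : ‖-β‖ = ‖α‖ := by rw [norm_neg, hlenαβ]
        have h7 : ⟪-β, α⟫ = ‖-β‖ * ‖α‖ := by
          rw [h5, real_inner_self_eq_norm_mul_norm, hl]
        have h8 := inner_eq_norm_mul_iff_real.mp h7
        rw [hl] at h8
        have hα0 : ‖α‖ ≠ 0 := norm_ne_zero_iff.mpr (h0 α hαΦ)
        exact smul_right_injective V hα0 h8
      apply hβΔ
      refine ⟨hβ, ?_⟩
      have : β = -α := by rw [← h6]; abel
      rw [this]
      exact Submodule.neg_mem _ hαW
  rw [hn'] at hn
  push_cast at hn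
  -- the reflection of β in α is α + β
  refine ⟨α, ⟨hαΦ, hαW⟩, ?_⟩
  have h9 : rootReflection α β = α + β := by
    rw [rootReflection_apply]
    have hαβ' : ⟪α, β⟫ = -(⟪α, α⟫ / 2) := by
      rw [real_inner_comm]; linarith
    rw [hαβ']
    have : 2 / ⟪α, α⟫ * -(⟪α, α⟫ / 2) = -1 := by
      field_simp
    rw [this]
    simp only [neg_one_smul]
    abel
  have := hrefl α hαΦ β hβ
  rwa [h9] at this
end

section
/- Let V be a minuscule representation of a simple Lie algebra with weight set Λ, and let λ₀ be the highest weight. If α is a root, λ, ρ ∈ Λ are weights with λ − α ∈ Λ, ρ + α ∈ Λ, and λ − α ≠ ρ, then λ − ρ is not a root (equivalently, the distance between λ and ρ in the weight graph is at least 2). -/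
open RealInnerProductSpace

/-- Let `Φ` be a (simply-laced) root system and `Λ` the set of weights of a
minuscule representation (all Cartan pairings of weights with roots lie in
`{-1, 0, 1}`), with highest weight `lam0`.  If `α` is a root and `lam, rho ∈ Λ`
are weights with `lam - α ∈ Λ`, `rho + α ∈ Λ` and `lam - α ≠ rho`, then
`lam - rho` is not a root (i.e. the distance between `lam` and `rho` in the
weight graph is at least `2`). -/
theorem minuscule_not_root
    {V : Type*} [NormedAddCommGroup V] [InnerProductSpace ℝ V]
    (Φ Λ : Set V)
    (h0 : ∀ α ∈ Φ, α ≠ 0)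
    (hneg : ∀ α ∈ Φ, -α ∈ Φ)
    (hlen : ∀ α ∈ Φ, ∀ β ∈ Φ, ‖α‖ = ‖β‖)
    (lam0 : V) (hlam0 : lam0 ∈ Λ)
    (hmin : ∀ lam ∈ Λ, ∀ α ∈ Φ,
      2 * ⟪lam, α⟫ / ⟪α, α⟫ = -1 ∨ 2 * ⟪lam, α⟫ / ⟪α, α⟫ = 0 ∨
        2 * ⟪lam, α⟫ / ⟪α, α⟫ = 1) :
    ∀ α ∈ Φ, ∀ lam ∈ Λ, ∀ rho ∈ Λ,
      lam - α ∈ Λ → rho + α ∈ Λ → lam - α ≠ rho → lam - rho ∉ Φ := by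
  intro α hα lam hlam rho hrho hlamα hrhoα hneq hβ
  have hαne : α ≠ 0 := h0 α hα
  have hαα : ⟪α, α⟫ ≠ 0 := fun h => hαne (inner_self_eq_zero.mp h)
  have hclam : 2 * ⟪lam, α⟫ / ⟪α, α⟫ = 1 := by
    have h1 := hmin lam hlam α hα
    have h2 := hmin _ hlamα α hα
    have key : 2 * ⟪lam - α, α⟫ / ⟪α, α⟫ = 2 * ⟪lam, α⟫ / ⟪α, α⟫ - 2 := by
      rw [inner_sub_left]; field_simp
    rw [key] at h2
    rcases h1 with h | h | h <;> rcases h2 with h' | h' | h' <;> linarith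
  have hcrho : 2 * ⟪rho, α⟫ / ⟪α, α⟫ = -1 := by
    have h1 := hmin rho hrho α hα
    have h2 := hmin _ hrhoα α hα
    have key : 2 * ⟪rho + α, α⟫ / ⟪α, α⟫ = 2 * ⟪rho, α⟫ / ⟪α, α⟫ + 2 := by
      rw [inner_add_left]; field_simp
    rw [key] at h2
    rcases h1 with h | h | h <;> rcases h2 with h' | h' | h' <;> linarith
  have hl : 2 * ⟪lam, α⟫ = ⟪α, α⟫ := by
    field_simp at hclam; linarith
  have hr : 2 * ⟪rho, α⟫ = -⟪α, α⟫ := by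
    field_simp at hcrho; linarith
  have hsub : ⟪lam - rho, α⟫ = ⟪α, α⟫ := by
    rw [inner_sub_left]; linarith
  have hnorm : ‖lam - rho‖ = ‖α‖ := hlen _ hβ _ hα
  have heqn : ⟪lam - rho, α⟫ = ‖lam - rho‖ * ‖α‖ := by
    rw [hsub, hnorm, real_inner_self_eq_norm_mul_norm]
  have := (inner_eq_norm_mul_iff_real).mp heqn
  rw [hnorm] at this
  have hval : lam - rho = α := by
    have hne : (‖α‖ : ℝ) ≠ 0 := norm_ne_zero_iff.mpr hαne
    exact smul_right_injective V hne this
  apply hneq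
  rw [← hval]; abel
end

section
/- Let S be a commutative ring and I an ideal of S such that: I² = 0, I is finitely generated as an ideal, S = ℤ ⊕ I as an abelian group with (1,0) the identity element, and I is torsion-free as an abelian group. Then for every nonzero ξ ∈ I there exists a ring homomorphism φ : S → ℂ[ε]/(ε²) with φ(ξ) ≠ 0. -/
/-- Let `S` be a commutative ring and `I` an ideal with `I² = 0`, `I` finitely
generated, `S = ℤ ⊕ I` as an abelian group (the `ℤ`-summand generated by `1`),
and `I` torsion free as an abelian group.  Then for every nonzero `ξ ∈ I` there
is a ring homomorphism `φ : S → ℂ[ε]/(ε²)` with `φ ξ ≠ 0`. -/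
theorem exists_hom_to_dualNumbers
    {S : Type*} [CommRing S] (I : Ideal S)
    (hI2 : I * I = ⊥)
    (hfg : I.FG)
    (hdec : ∀ s : S, ∃! p : ℤ × I, s = p.1 • (1 : S) + (p.2 : S))
    (htf : ∀ (n : ℤ), ∀ x ∈ I, n • x = 0 → n = 0 ∨ x = 0) :
    ∀ ξ ∈ I, ξ ≠ 0 → ∃ φ : S →+* DualNumber ℂ, φ ξ ≠ 0 := by
  intro ξ hξI hξ0
  -- product of two elements of I is zero
  have hmul0 : ∀ x ∈ I, ∀ y ∈ I, x * y = 0 := by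
    intro x hx y hy
    have : x * y ∈ I * I := Ideal.mul_mem_mul hx hy
    rw [hI2] at this
    simpa using this
  -- decomposition map
  set d : S → ℤ × I := fun s => (hdec s).choose with hd_def
  have hd : ∀ s, s = (d s).1 • (1 : S) + ((d s).2 : S) := fun s => (hdec s).choose_spec.1
  have hdu : ∀ (s : S) (p : ℤ × I), s = p.1 • (1 : S) + (p.2 : S) → d s = p := by
    intro s p h
    exact ((hdec s).choose_spec.2 p h).symm
  -- I is a finitely generated ℤ-module
  haveI hfinI : Module.Finite ℤ I := by
    obtain ⟨T, hT⟩ := hfg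
    have hT' : Submodule.span S (T : Set S) = I := hT
    have hspan : Submodule.span ℤ (T : Set S) = I.restrictScalars ℤ := by
      apply le_antisymm
      · rw [Submodule.span_le]
        intro t ht
        have : t ∈ Submodule.span S (T : Set S) := Submodule.subset_span ht
        rw [hT'] at this
        exact this
      · intro x hx
        have hx' : x ∈ Submodule.span S (T : Set S) := by rw [hT']; exact hx
        refine Submodule.span_induction (p := fun x _ => x ∈ Submodule.span ℤ (T : Set S))
          (fun y hy => Submodule.subset_span hy) (Submodule.zero_mem _)
          (fun a b _ _ ha hb => Submodule.add_mem _ ha hb) ?_ hx'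
        intro a y hy hyspan
        have hyI : y ∈ I := by rw [← hT']; exact hy
        have : a • y = (d a).1 • y + ((d a).2 : S) * y := by
          conv_lhs => rw [hd a]
          rw [smul_eq_mul, add_mul, smul_mul_assoc, one_mul]
        rw [this, hmul0 _ (d a).2.2 _ hyI, add_zero]
        exact Submodule.smul_mem _ _ hyspan
    haveI : Module.Finite ℤ (I.restrictScalars ℤ) := by
      rw [Module.Finite.iff_fg]
      exact ⟨T, hspan⟩
    exact Module.Finite.equiv
      (Submodule.restrictScalarsEquiv ℤ S S I).toAddEquiv.toIntLinearEquiv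
  -- I is torsion free as ℤ-module
  haveI : NoZeroSMulDivisors ℤ I := by
    constructor
    intro n x h
    have hc : n • (x : S) = 0 := by
      have := congrArg (Subtype.val : I → S) h
      simpa using this
    rcases htf n x x.2 hc with h1 | h1
    · exact Or.inl h1
    · exact Or.inr (Subtype.ext h1)
  -- hence free, choose a basis
  haveI : Module.Free ℤ I := Module.free_of_finite_type_torsion_free'
  let b := Module.Free.chooseBasis ℤ I
  set ξ' : I := ⟨ξ, hξI⟩ with hξ'def
  have hξ'0 : ξ' ≠ 0 := fun h => hξ0 (by simpa [hξ'def] using congrArg (Subtype.val : I → S) h)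
  have hrepr : b.repr ξ' ≠ 0 := fun h => hξ'0 (by simpa using congrArg b.repr.symm h)
  obtain ⟨i, hi⟩ : ∃ i, b.repr ξ' i ≠ 0 := by
    by_contra hc
    push_neg at hc
    exact hrepr (Finsupp.ext hc)
  -- the ℤ-linear functional
  let f : I → ℂ := fun x => ((b.repr x i : ℤ) : ℂ)
  have fadd : ∀ x y : I, f (x + y) = f x + f y := by
    intro x y; simp only [f, map_add, Finsupp.add_apply]; push_cast; ring
  have fsmul : ∀ (n : ℤ) (x : I), f (n • x) = n * f x := by
    intro n x; simp only [f, map_smul, Finsupp.smul_apply, smul_eq_mul]; push_cast; ring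
  have f0 : f 0 = 0 := by simp [f]
  -- facts about the decomposition
  have hd1 : d 1 = (1, 0) := hdu 1 (1, 0) (by simp)
  have hdadd : ∀ s t : S, d (s + t) = ((d s).1 + (d t).1, (d s).2 + (d t).2) := by
    intro s t
    refine hdu _ _ ?_
    conv_lhs => rw [hd s, hd t]
    push_cast [zsmul_one, Submodule.coe_add]
    ring
  have hdmul : ∀ s t : S, d (s * t) =
      ((d s).1 * (d t).1,
        ⟨((d s).1 : S) * ((d t).2 : S) + ((d t).1 : S) * ((d s).2 : S),
          add_mem (I.mul_mem_left _ (d t).2.2) (I.mul_mem_left _ (d s).2.2)⟩) := by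
    intro s t
    refine hdu _ _ ?_
    have hxy : ((d s).2 : S) * ((d t).2 : S) = 0 := hmul0 _ (d s).2.2 _ (d t).2.2
    conv_lhs => rw [hd s, hd t]
    push_cast [zsmul_one]
    linear_combination hxy
  have hdξ : d ξ = (0, ξ') := hdu ξ (0, ξ') (by simp [hξ'def])
  -- components of the decomposition of sums and products
  have hdmul1 : ∀ s t : S, (d (s * t)).1 = (d s).1 * (d t).1 := by
    intro s t; rw [hdmul s t]
  have hdmul2 : ∀ s t : S, (d (s * t)).2 = (d s).1 • (d t).2 + (d t).1 • (d s).2 := by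
    intro s t
    rw [hdmul s t]
    apply Subtype.ext
    push_cast
    rw [zsmul_eq_mul, zsmul_eq_mul]
  -- the homomorphism
  refine ⟨{ toFun := fun s => TrivSqZeroExt.inl ((d s).1 : ℂ) + TrivSqZeroExt.inr (f (d s).2)
            map_one' := ?_
            map_mul' := ?_
            map_zero' := ?_
            map_add' := ?_ }, ?_⟩
  · show TrivSqZeroExt.inl ((d 1).1 : ℂ) + TrivSqZeroExt.inr (f (d 1).2) = 1
    rw [hd1]
    simp [f0, TrivSqZeroExt.inl_one, TrivSqZeroExt.inr_zero]
  · intro s t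
    show TrivSqZeroExt.inl ((d (s * t)).1 : ℂ) + TrivSqZeroExt.inr (f (d (s * t)).2)
        = (TrivSqZeroExt.inl ((d s).1 : ℂ) + TrivSqZeroExt.inr (f (d s).2))
          * (TrivSqZeroExt.inl ((d t).1 : ℂ) + TrivSqZeroExt.inr (f (d t).2))
    rw [hdmul1 s t, hdmul2 s t, fadd, fsmul, fsmul]
    simp only [mul_add, add_mul, TrivSqZeroExt.inl_mul_inl, TrivSqZeroExt.inl_mul_inr,
      TrivSqZeroExt.inr_mul_inl, TrivSqZeroExt.inr_mul_inr, smul_eq_mul, op_smul_eq_smul,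
      add_zero, ← TrivSqZeroExt.inr_add]
    push_cast
    rw [add_assoc, ← TrivSqZeroExt.inr_add, add_comm (((d t).1 : ℂ) * f (d s).2)]
  · have hd0 : d 0 = (0, 0) := hdu 0 (0, 0) (by simp)
    show TrivSqZeroExt.inl ((d 0).1 : ℂ) + TrivSqZeroExt.inr (f (d 0).2) = 0
    rw [hd0]
    simp [f0, TrivSqZeroExt.inl_zero, TrivSqZeroExt.inr_zero]
  · intro s t
    show TrivSqZeroExt.inl ((d (s + t)).1 : ℂ) + TrivSqZeroExt.inr (f (d (s + t)).2)
        = (TrivSqZeroExt.inl ((d s).1 : ℂ) + TrivSqZeroExt.inr (f (d s).2))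
          + (TrivSqZeroExt.inl ((d t).1 : ℂ) + TrivSqZeroExt.inr (f (d t).2))
    rw [hdadd s t]
    have : f ((d s).2 + (d t).2) = f (d s).2 + f (d t).2 := fadd _ _
    push_cast [this, TrivSqZeroExt.inl_add, TrivSqZeroExt.inr_add]
    abel
  · intro h
    have h2 : TrivSqZeroExt.snd
        (TrivSqZeroExt.inl ((d ξ).1 : ℂ) + TrivSqZeroExt.inr (f (d ξ).2)) = 0 := by
      rw [show (TrivSqZeroExt.inl ((d ξ).1 : ℂ) + TrivSqZeroExt.inr (f (d ξ).2))
          = (0 : DualNumber ℂ) from h]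
      rfl
    rw [TrivSqZeroExt.snd_add, TrivSqZeroExt.snd_inl, TrivSqZeroExt.snd_inr, zero_add, hdξ] at h2
    have h3 : ((b.repr ξ' i : ℤ) : ℂ) = 0 := h2
    exact hi (by exact_mod_cast h3)
end

section
/- Let G be a group, and let g ∈ G act on square matrices over a commutative ring R of size n by conjugation, m ↦ g m g⁻¹, where g is an invertible n×n matrix. If E is a subset of invertible matrices such that g^k E g^{-k} ⊆ L for every k ≥ 1, where L is an R-submodule of the matrix ring, then g⁻¹ E g ⊆ L, provided L also contains g^0 E g^0 = E. (Concretely: since by Cayley–Hamilton the map m ↦ g⁻¹ m g is a polynomial in the map m ↦ g m g⁻¹ with coefficients in R, any R-submodule of M_n(R) containing all nonnegative conjugation-powers of E also contains g⁻¹Eg.) -/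
/-!
If an invertible linear endomorphism `f` of a finite free module is killed by a polynomial `p`
whose constant term `c` is a unit, then writing `p = X * p.divX + c` gives
`f⁻¹ = -c⁻¹ • p.divX(f)`. By Cayley–Hamilton this applies to `p = f.charpoly`, whose constant
term is `± det f`. So `f⁻¹ m` is an `R`-linear combination of the `f ^ k m`, and it lies in every
submodule containing all of them. Conjugation by `g` is such an `f` on `M_n(R)`.
-/

open Polynomial

theorem Units.exists_aeval_eq_inv_of_aeval_eq_zero {R A : Type*} [CommRing R] [Ring A]
    [Algebra R A] {a : Aˣ} {p : R[X]} (hp : aeval (a : A) p = 0) (hp0 : IsUnit (p.coeff 0)) :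
    ∃ q : R[X], aeval (a : A) q = ↑a⁻¹ := by
  obtain ⟨c, hc⟩ := hp0
  refine ⟨-C (↑c⁻¹ : R) * p.divX, ?_⟩
  have hsplit : (a : A) * aeval (a : A) p.divX + (c : R) • 1 = 0 := by
    conv_rhs => rw [← hp, ← X_mul_divX_add p]
    rw [map_add, map_mul, aeval_X, aeval_C, hc, Algebra.algebraMap_eq_smul_one]
  have hinv : aeval (a : A) p.divX + (c : R) • ↑a⁻¹ = 0 := by
    simpa [mul_add, ← mul_assoc] using congrArg ((↑a⁻¹ : A) * ·) hsplit
  rw [map_mul, map_neg, aeval_C, Algebra.algebraMap_eq_smul_one, neg_mul, smul_one_mul,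
    eq_neg_of_add_eq_zero_left hinv, smul_neg, neg_neg, smul_smul, Units.inv_mul, one_smul]

theorem Module.End.exists_aeval_eq_inv {R M : Type*} [CommRing R] [AddCommGroup M] [Module R M]
    [Module.Free R M] [Module.Finite R M] (f : (Module.End R M)ˣ) :
    ∃ q : R[X], aeval (f : Module.End R M) q = ↑f⁻¹ := by
  refine Units.exists_aeval_eq_inv_of_aeval_eq_zero (LinearMap.aeval_self_charpoly _) ?_
  have hdet := (LinearMap.isUnit_iff_isUnit_det (f : Module.End R M)).mp f.isUnit
  rw [LinearMap.det_eq_sign_charpoly_coeff] at hdet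
  exact isUnit_of_mul_isUnit_right hdet

theorem Submodule.aeval_apply_mem_of_forall_pow_apply_mem {R M : Type*} [CommSemiring R]
    [AddCommMonoid M] [Module R M] (L : Submodule R M) {f : Module.End R M} {m : M}
    (h : ∀ k : ℕ, (f ^ k) m ∈ L) (q : R[X]) : aeval f q m ∈ L := by
  rw [aeval_eq_sum_range, LinearMap.sum_apply]
  exact L.sum_mem fun k _ ↦ L.smul_mem _ (h k)

theorem Submodule.inv_smul_mem_of_forall_pow_smul_mem {R M G : Type*} [CommRing R]
    [AddCommGroup M] [Module R M] [Module.Free R M] [Module.Finite R M] [Group G]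
    [DistribMulAction G M] [SMulCommClass G R M] (L : Submodule R M) (g : G) {m : M}
    (h : ∀ k : ℕ, g ^ k • m ∈ L) : g⁻¹ • m ∈ L := by
  let f := (DistribMulAction.toModuleEnd R M).toHomUnits g
  obtain ⟨q, hq⟩ := Module.End.exists_aeval_eq_inv f
  have hinv : g⁻¹ • m = aeval (f : Module.End R M) q m := by
    rw [hq, ← map_inv]; rfl
  rw [hinv]
  refine L.aeval_apply_mem_of_forall_pow_apply_mem (fun k ↦ ?_) q
  rw [← Units.val_pow_eq_pow_val, ← map_pow]
  exact h k

/-- Cayley–Hamilton trick: let `g ∈ GL_n(R)` and let `L` be an `R`-submodule of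
`M_n(R)`.  If all the nonnegative conjugation-powers `gᵏ E g⁻ᵏ` (`k ≥ 0`,
including `k = 0`, i.e. `E ⊆ L`) of a set of matrices `E` land in `L`, then
`g⁻¹ E g ⊆ L`. -/
theorem inv_conj_mem_of_pow_conj_mem
    {R : Type*} [CommRing R] {n : ℕ}
    (g : GL (Fin n) R)
    (L : Submodule R (Matrix (Fin n) (Fin n) R))
    (E : Set (Matrix (Fin n) (Fin n) R))
    (h : ∀ k : ℕ, ∀ m ∈ E,
      (↑(g ^ k) : Matrix (Fin n) (Fin n) R) * m * (↑((g ^ k)⁻¹) : Matrix (Fin n) (Fin n) R) ∈ L) :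
    ∀ m ∈ E, (↑(g⁻¹) : Matrix (Fin n) (Fin n) R) * m * (↑g : Matrix (Fin n) (Fin n) R) ∈ L := by
  intro m hm
  have hconj := L.inv_smul_mem_of_forall_pow_smul_mem (ConjAct.toConjAct g) (m := m) fun k ↦ by
    simpa [ConjAct.units_smul_def] using h k m hm
  simpa [ConjAct.units_smul_def] using hconj
end
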